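/- arXiv:math/0611232 — 6 statements merged into one kernel-verified Lean document; each statement's English description precedes it below -/
import Mathlib

section
/- Let r ≥ 1, let (ϖ_1,…,ϖ_r) be a basis of Euclidean space ℝ^r, let R_+ be a finite family of m nonzero vectors in ℝ^r, let ρ ∈ ℝ^r satisfy ⟨ρ, α⟩ > 0 for all α ∈ R_+, and let ε > 0. For λ ∈ ℕ^r write λ̂ = ∑_i λ_i ϖ_i and l(λ) = ∑_i λ_i. Then there exists a constant K_2 > 0 such that for every λ ∈ ℕ^r with l(λ) ≥ 1 and ⟨λ̂, α⟩ ≥ ε·‖λ̂‖ for all α ∈ R_+, one has ∏_{α ∈ R_+} (1 + ⟨λ̂, α⟩/⟨ρ, α⟩) ≥ K_2 · l(λ)^m. -/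
open RealInnerProductSpace

/-
On the cone `⟨λ̂, α⟩ ≥ ε ‖λ̂‖`, each factor of the Weyl product is at least `ε ‖λ̂‖ / ⟨ρ, α⟩`.
Since all norms on a finite-dimensional space are equivalent, `l(λ)`, which is the `ℓ¹` norm of
the coordinates of `λ̂` in the basis `ϖ`, is at most `C ‖λ̂‖`; hence every factor is at least a
fixed positive multiple of `l(λ)`, and the product is at least a positive multiple of `l(λ)^m`.
-/

theorem Module.Basis.exists_sum_norm_coeff_le {𝕜 E ι : Type*} [NontriviallyNormedField 𝕜]
    [CompleteSpace 𝕜] [NormedAddCommGroup E] [NormedSpace 𝕜 E] [Fintype ι]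
    (ϖ : Module.Basis ι 𝕜 E) :
    ∃ C : ℝ, 0 < C ∧ ∀ c : ι → 𝕜, ∑ i, ‖c i‖ ≤ C * ‖∑ i, c i • ϖ i‖ := by
  set coords : E →L[𝕜] ι → 𝕜 := ϖ.equivFunL.toContinuousLinearMap
  obtain ⟨B, hB, hbound⟩ := coords.bound
  refine ⟨Fintype.card ι * B + 1, by positivity, fun c => ?_⟩
  have hcoord : coords (∑ i, c i • ϖ i) = c := by
    rw [← ϖ.equivFun_symm_apply]
    exact ϖ.equivFun.apply_symm_apply c
  calc ∑ i, ‖c i‖ ≤ ∑ _i : ι, ‖c‖ := Finset.sum_le_sum fun i _ => norm_le_pi_norm c i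
    _ = Fintype.card ι * ‖c‖ := by simp
    _ ≤ Fintype.card ι * (B * ‖∑ i, c i • ϖ i‖) := by
        gcongr
        simpa only [hcoord] using hbound (∑ i, c i • ϖ i)
    _ ≤ (Fintype.card ι * B + 1) * ‖∑ i, c i • ϖ i‖ := by
        nlinarith [norm_nonneg (∑ i, c i • ϖ i)]

theorem div_mul_le_div_of_le_mul {ε C p l n t : ℝ} (hε : 0 < ε) (hC : 0 < C) (hp : 0 < p)
    (hl : l ≤ C * n) (ht : ε * n ≤ t) : ε / (C * p) * l ≤ t / p :=
  calc ε / (C * p) * l ≤ ε / (C * p) * (C * n) := by gcongr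
    _ = ε * n / p := by field_simp
    _ ≤ t / p := by gcongr

theorem stmt_3_general (r m : ℕ)
    (ϖ : Module.Basis (Fin r) ℝ (EuclideanSpace ℝ (Fin r)))
    (α : Fin m → EuclideanSpace ℝ (Fin r))
    (ρ : EuclideanSpace ℝ (Fin r))
    (hρ : ∀ j : Fin m, 0 < ⟪ρ, α j⟫)
    (ε : ℝ) (hε : 0 < ε) :
    ∃ K₂ : ℝ, 0 < K₂ ∧ ∀ lam : Fin r → ℕ, 1 ≤ ∑ i, lam i →
      (∀ j : Fin m, ε * ‖∑ i, (lam i : ℝ) • ϖ i‖ ≤ ⟪∑ i, (lam i : ℝ) • ϖ i, α j⟫) →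
      K₂ * ((∑ i, lam i : ℕ) : ℝ) ^ m
        ≤ ∏ j, (1 + ⟪∑ i, (lam i : ℝ) • ϖ i, α j⟫ / ⟪ρ, α j⟫) := by
  obtain ⟨C, hC, hcoeff⟩ := ϖ.exists_sum_norm_coeff_le
  have hK : ∀ j, 0 < ε / (C * ⟪ρ, α j⟫) := fun j => by have := hρ j; positivity
  refine ⟨∏ j, ε / (C * ⟪ρ, α j⟫), Finset.prod_pos fun j _ => hK j, fun lam _ hcone => ?_⟩
  set v := ∑ i, (lam i : ℝ) • ϖ i
  have hl : ((∑ i, lam i : ℕ) : ℝ) ≤ C * ‖v‖ := by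
    simpa only [Nat.cast_sum, Real.norm_natCast] using hcoeff fun i => (lam i : ℝ)
  calc (∏ j, ε / (C * ⟪ρ, α j⟫)) * ((∑ i, lam i : ℕ) : ℝ) ^ m
      = ∏ j, ε / (C * ⟪ρ, α j⟫) * ((∑ i, lam i : ℕ) : ℝ) := by
        rw [Finset.prod_mul_distrib, Finset.prod_const, Finset.card_univ, Fintype.card_fin]
    _ ≤ ∏ j, (1 + ⟪v, α j⟫ / ⟪ρ, α j⟫) := by
        refine Finset.prod_le_prod (fun j _ => by have := hK j; positivity) fun j _ => ?_
        exact (div_mul_le_div_of_le_mul hε hC (hρ j) hl (hcone j)).trans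
          (le_add_of_nonneg_left zero_le_one)

/-- Lower Weyl dimension estimate on the cone `C'`: `dim(λ) ≥ K₂ · l(λ)^m`. -/
theorem stmt_3 (r m : ℕ) (hr : 1 ≤ r)
    (ϖ : Module.Basis (Fin r) ℝ (EuclideanSpace ℝ (Fin r)))
    (α : Fin m → EuclideanSpace ℝ (Fin r))
    (hα : ∀ j : Fin m, α j ≠ 0)
    (ρ : EuclideanSpace ℝ (Fin r))
    (hρ : ∀ j : Fin m, 0 < ⟪ρ, α j⟫)
    (ε : ℝ) (hε : 0 < ε) :
    ∃ K₂ : ℝ, 0 < K₂ ∧ ∀ lam : Fin r → ℕ, 1 ≤ ∑ i, lam i →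
      (∀ j : Fin m, ε * ‖∑ i, (lam i : ℝ) • ϖ i‖ ≤ ⟪∑ i, (lam i : ℝ) • ϖ i, α j⟫) →
      K₂ * ((∑ i, lam i : ℕ) : ℝ) ^ m
        ≤ ∏ j, (1 + ⟪∑ i, (lam i : ℝ) • ϖ i, α j⟫ / ⟪ρ, α j⟫) :=
  stmt_3_general r m ϖ α ρ hρ ε hε
end

section
/- Let K be a field and let S_1, S_2, C_1, C_2 ∈ K satisfy C_1 = (S_1 − 1)(C_2 + 1) and C_2 = (S_2 − 1)(C_1 + 1), with S_1 ≠ 0, S_2 ≠ 0, S_1 + S_2 − S_1 S_2 ≠ 0, and S := 1 + C_1 + C_2 ≠ 0. Then S = S_1 S_2 / (S_1 + S_2 − S_1 S_2), and consequently 1 − 1/S = (1 − 1/S_1) + (1 − 1/S_2). -/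
/-! Substituting each equation into the other gives `C₁ D = (S₁ - 1) S₂` and
`C₂ D = (S₂ - 1) S₁` with `D = S₁ + S₂ - S₁ S₂`, so `S D = S₁ S₂`. Dividing by `S S₁ S₂` turns this
into `1/S = 1/S₁ + 1/S₂ - 1`, which is the additivity of `P = 1 - 1/S`; since `S₁ S₂ ≠ 0`, the
identity `S D = S₁ S₂` also shows that `S` and `D` are nonzero. -/

theorem mul_sub_mul_eq_of_alternating {R : Type*} [CommRing R] {S₁ S₂ C₁ C₂ : R}
    (h₁ : C₁ = (S₁ - 1) * (C₂ + 1)) (h₂ : C₂ = (S₂ - 1) * (C₁ + 1)) :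
    (1 + C₁ + C₂) * (S₁ + S₂ - S₁ * S₂) = S₁ * S₂ := by
  linear_combination S₂ * h₁ + S₁ * h₂

theorem one_sub_one_div_eq_add_of_mul_eq {K : Type*} [Field K] {S S₁ S₂ : K}
    (hS₁ : S₁ ≠ 0) (hS₂ : S₂ ≠ 0) (h : S * (S₁ + S₂ - S₁ * S₂) = S₁ * S₂) :
    1 - 1 / S = (1 - 1 / S₁) + (1 - 1 / S₂) := by
  have hS : S ≠ 0 := left_ne_zero_of_mul (h ▸ mul_ne_zero hS₁ hS₂)
  field_simp
  linear_combination h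

theorem stmt_6_general {K : Type*} [Field K] (S₁ S₂ C₁ C₂ : K)
    (h₁ : C₁ = (S₁ - 1) * (C₂ + 1)) (h₂ : C₂ = (S₂ - 1) * (C₁ + 1))
    (hS₁ : S₁ ≠ 0) (hS₂ : S₂ ≠ 0) :
    1 + C₁ + C₂ = S₁ * S₂ / (S₁ + S₂ - S₁ * S₂) ∧
    1 - 1 / (1 + C₁ + C₂) = (1 - 1 / S₁) + (1 - 1 / S₂) := by
  have key := mul_sub_mul_eq_of_alternating h₁ h₂
  have hden : S₁ + S₂ - S₁ * S₂ ≠ 0 := right_ne_zero_of_mul (key ▸ mul_ne_zero hS₁ hS₂)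
  exact ⟨eq_div_of_mul_eq hden key, one_sub_one_div_eq_add_of_mul_eq hS₁ hS₂ key⟩

/-- Solving the free-product system: if `C₁ = (S₁-1)(C₂+1)` and `C₂ = (S₂-1)(C₁+1)`,
then `S = 1 + C₁ + C₂ = S₁S₂/(S₁+S₂-S₁S₂)` and `1 - 1/S = (1 - 1/S₁) + (1 - 1/S₂)`. -/
theorem stmt_6 {K : Type*} [Field K] (S₁ S₂ C₁ C₂ : K)
    (h₁ : C₁ = (S₁ - 1) * (C₂ + 1)) (h₂ : C₂ = (S₂ - 1) * (C₁ + 1))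
    (hS₁ : S₁ ≠ 0) (hS₂ : S₂ ≠ 0) (hden : S₁ + S₂ - S₁ * S₂ ≠ 0)
    (hS : 1 + C₁ + C₂ ≠ 0) :
    1 + C₁ + C₂ = S₁ * S₂ / (S₁ + S₂ - S₁ * S₂) ∧
    1 - 1 / (1 + C₁ + C₂) = (1 - 1 / S₁) + (1 - 1 / S₂) :=
  stmt_6_general S₁ S₂ C₁ C₂ h₁ h₂ hS₁ hS₂
end

section
/- Let n ≥ 3 be an integer and define a sequence (d_k) of natural numbers by d_0 = 1, d_1 = n, and d_{k+1} = n·d_k − d_{k−1} for k ≥ 1. Then in the ring of formal power series ℝ⟦X⟧ one has the identity (1 − (n²−2)X + X²)·(1 − X) · ∑_{k≥0} d_k² X^k = 1 + X. -/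
open PowerSeries

/-! The squares `e_k = d_k²` satisfy `e_{k+3} - e_k = (n² - 1)(e_{k+2} - e_{k+1})`, a linear recurrence
whose characteristic polynomial `1 - (n²-1)X + (n²-1)X² - X³` factors as `(1 - (n²-2)X + X²)(1 - X)`.
Multiplying the series by it therefore kills every coefficient from `X³` on, and the three initial
ones are computed from `d_0 = 1`, `d_1 = n`, `d_2 = n² - 1`. -/

theorem sq_sub_sq_eq_of_add_eq_mul {R : Type*} [CommRing R] {t : R} {x : ℕ → R}
    (hx : ∀ k, x (k + 2) + x k = t * x (k + 1)) (k : ℕ) :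
    x (k + 3) ^ 2 - x k ^ 2 = (t ^ 2 - 1) * (x (k + 2) ^ 2 - x (k + 1) ^ 2) := by
  have hnext : x (k + 3) = t * x (k + 2) - x (k + 1) := eq_sub_of_add_eq (hx (k + 1))
  have hprev : x k = t * x (k + 1) - x (k + 2) := eq_sub_of_add_eq' (hx k)
  rw [hnext, hprev]
  ring

theorem PowerSeries.mul_mk_eq_of_recurrence {R : Type*} [CommRing R] (c : R) (e : ℕ → R)
    (he : ∀ k, e (k + 3) - e k = c * (e (k + 2) - e (k + 1))) :
    (1 - C c * X + C c * X ^ 2 - X ^ 3) * mk e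
      = C (e 0) + C (e 1 - c * e 0) * X + C (e 2 - c * e 1 + c * e 0) * X ^ 2 := by
  ext k
  rcases k with _ | _ | _ | m
  case succ.succ.succ =>
    simp only [sub_mul, add_mul, one_mul, mul_assoc, map_sub, map_add, coeff_mk, coeff_C_mul,
      coeff_succ_X_mul, coeff_X_pow_mul', le_add_iff_nonneg_left, zero_le, ↓reduceIte,
      Nat.reduceSubDiff, map_mul, coeff_succ_C, coeff_succ_mul_X, mul_zero, sub_self, add_zero,
      coeff_X_pow, Nat.reduceEqDiff]
    linear_combination he m
  all_goals simp [sub_mul, add_mul, mul_assoc, coeff_X_pow_mul', coeff_X_pow]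

theorem stmt_7_general (n : ℕ) (d : ℕ → ℕ)
    (h0 : d 0 = 1) (h1 : d 1 = n)
    (hrec : ∀ k : ℕ, 1 ≤ k → d (k + 1) + d (k - 1) = n * d k) :
    (1 - PowerSeries.C ((n : ℝ) ^ 2 - 2) * PowerSeries.X + PowerSeries.X ^ 2) *
        (1 - PowerSeries.X) * PowerSeries.mk (fun k => ((d k : ℝ)) ^ 2)
      = 1 + PowerSeries.X := by
  have hd : ∀ k, (d (k + 2) : ℝ) + d k = n * d (k + 1) := fun k => by
    exact_mod_cast hrec (k + 1) k.succ_pos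
  have hd2 : (d 2 : ℝ) = n ^ 2 - 1 := by
    have := hd 0
    rw [h0, h1, Nat.cast_one] at this
    linear_combination this
  have hseries := mul_mk_eq_of_recurrence ((n : ℝ) ^ 2 - 1) (fun k => (d k : ℝ) ^ 2)
    (sq_sub_sq_eq_of_add_eq_mul (x := fun k => (d k : ℝ)) hd)
  calc _ = (1 - C ((n : ℝ) ^ 2 - 1) * X + C ((n : ℝ) ^ 2 - 1) * X ^ 2 - X ^ 3)
        * mk (fun k => (d k : ℝ) ^ 2) := by
        rw [show (n : ℝ) ^ 2 - 2 = ((n : ℝ) ^ 2 - 1) - 1 by ring, map_sub, map_one]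
        ring
    _ = C 1 + C 1 * X + C 0 * X ^ 2 := by
        rw [hseries, h0, h1, hd2]
        congr 4 <;> push_cast <;> ring
    _ = 1 + X := by simp

/-- The sphere-volume series of `A_o(n)`:
`S(z) = ∑ d_k² z^k = (1+z)/((1-(n²-2)z+z²)(1-z))` where `d_k = dim u_k`. -/
theorem stmt_7 (n : ℕ) (hn : 3 ≤ n) (d : ℕ → ℕ)
    (h0 : d 0 = 1) (h1 : d 1 = n)
    (hrec : ∀ k : ℕ, 1 ≤ k → d (k + 1) + d (k - 1) = n * d k) :
    (1 - PowerSeries.C ((n : ℝ) ^ 2 - 2) * PowerSeries.X + PowerSeries.X ^ 2) *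
        (1 - PowerSeries.X) * PowerSeries.mk (fun k => ((d k : ℝ)) ^ 2)
      = 1 + PowerSeries.X :=
  stmt_7_general n d h0 h1 hrec
end

section
/- Let n ≥ 2 be an integer and let (t_k) be the real coefficients of the formal power series expansion (1+X)/(1 − (2n²−1)X + 2(n²−1)X² − 2X³) = ∑_{k≥0} t_k X^k. Then the polynomial r³ − (2n²−1)r² + 2(n²−1)r − 2 has a largest real root r_n, this root satisfies r_n > 1, and lim_{k→∞} t_k^{1/k} = r_n. -/
/-!
With `a = 2n² - 1`, the cubic `p(x) = x³ - a x² + (a - 1) x - 2` is negative at `a - 1` and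
nonnegative at `a`, so it has a root `r ∈ [a - 1, a]`. Then `p(x) = (x - r)(x² - e x + c)` with
`e = a - r ∈ [0, 1]` and `c = 2 / r`, and the quadratic factor is positive for `x ≥ r`, so `r` is
the largest root. The coefficients `t_k` satisfy the linear recurrence with characteristic
polynomial `p`; removing their geometric component `A rᵏ` leaves a sequence driven by the
quadratic factor alone, which is `O(2ᵏ)`. Hence `t_k / rᵏ → A > 0`, and so `t_k^(1/k) → r`.
-/

open Filter PowerSeries Topology

theorem coeff_eq_of_cubic_mul_mk_eq {R : Type*} [CommRing R] {a b d : R} {t : ℕ → R}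
    (h : (1 - C a * X + C b * X ^ 2 - C d * X ^ 3) * mk t = 1 + X) :
    t 0 = 1 ∧ t 1 = a + 1 ∧ t 2 = a * (a + 1) - b ∧
      ∀ k, t (k + 3) = a * t (k + 2) - b * t (k + 1) + d * t k := by
  replace h : (1 - C a * X ^ 1 + C b * X ^ 2 - C d * X ^ 3) * mk t = 1 + X ^ 1 := by
    simpa only [pow_one] using h
  have hc (k : ℕ) := congrArg (coeff k) h
  simp only [sub_mul, add_mul, one_mul, mul_assoc, map_add, map_sub, coeff_C_mul,
    coeff_X_pow_mul', coeff_mk, coeff_one, coeff_X_pow] at hc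
  have h0 := hc 0
  have h1 := hc 1
  have h2 := hc 2
  norm_num at h0 h1 h2
  refine ⟨h0, by linear_combination h1 + a * h0,
    by linear_combination h2 + a * h1 + (a ^ 2 - b) * h0, fun k => ?_⟩
  have h3 := hc (k + 3)
  simp only [le_add_iff_nonneg_left, zero_le, ↓reduceIte, show k + 3 - 1 = k + 2 by omega,
    show k + 3 - 2 = k + 1 by omega, add_tsub_cancel_right, Nat.add_eq_zero_iff,
    OfNat.ofNat_ne_zero, and_false, Nat.reduceEqDiff, add_zero] at h3
  linear_combination h3

theorem exists_root_mem_Icc_of_two_le {a : ℝ} (ha : 2 ≤ a) :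
    ∃ r ∈ Set.Icc (a - 1) a, r ^ 3 - a * r ^ 2 + (a - 1) * r - 2 = 0 := by
  have hcont : ContinuousOn (fun x : ℝ => x ^ 3 - a * x ^ 2 + (a - 1) * x - 2)
      (Set.Icc (a - 1) a) := by fun_prop
  refine intermediate_value_Icc (by linarith) hcont ⟨?_, ?_⟩ <;> nlinarith

theorem le_of_root_of_sub_one_le {a r x : ℝ} (ha : 2 ≤ a) (hr : a - 1 ≤ r)
    (hroot : r ^ 3 - a * r ^ 2 + (a - 1) * r - 2 = 0)
    (hx : x ^ 3 - a * x ^ 2 + (a - 1) * x - 2 = 0) : x ≤ r := by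
  by_contra! hxr
  have hc : r * (r ^ 2 - a * r + a - 1) = 2 := by linear_combination hroot
  have hfactor : x ^ 3 - a * x ^ 2 + (a - 1) * x - 2
      = (x - r) * (x ^ 2 - (a - r) * x + (r ^ 2 - a * r + a - 1)) := by
    linear_combination hroot
  have hquad : 0 < x ^ 2 - (a - r) * x + (r ^ 2 - a * r + a - 1) := by nlinarith
  linarith [mul_pos (sub_pos.mpr hxr) hquad]

theorem abs_le_mul_pow_of_two_step {u : ℕ → ℝ} {e c ρ M : ℝ} (hρ : 0 ≤ ρ)
    (hec : |e| * ρ + |c| ≤ ρ ^ 2) (h0 : |u 0| ≤ M) (h1 : |u 1| ≤ M * ρ)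
    (hu : ∀ k, u (k + 2) = e * u (k + 1) - c * u k) (k : ℕ) : |u k| ≤ M * ρ ^ k := by
  have hM : 0 ≤ M := (abs_nonneg _).trans h0
  induction k using Nat.twoStepInduction with
  | zero => simpa using h0
  | one => simpa using h1
  | more k ih₀ ih₁ =>
    calc |u (k + 2)| ≤ |e| * |u (k + 1)| + |c| * |u k| := by
          rw [hu, ← abs_mul, ← abs_mul]; exact abs_sub _ _
      _ ≤ |e| * (M * ρ ^ (k + 1)) + |c| * (M * ρ ^ k) := by gcongr
      _ = M * ρ ^ k * (|e| * ρ + |c|) := by ring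
      _ ≤ M * ρ ^ k * ρ ^ 2 := by gcongr
      _ = M * ρ ^ (k + 2) := by ring

theorem tendsto_div_pow_zero_of_abs_le {u : ℕ → ℝ} {ρ r M : ℝ} (hρ : 0 ≤ ρ) (hρr : ρ < r)
    (hu : ∀ k, |u k| ≤ M * ρ ^ k) : Tendsto (fun k => u k / r ^ k) atTop (𝓝 0) := by
  have hr : 0 < r := hρ.trans_lt hρr
  refine squeeze_zero_norm (a := fun k => M * (ρ / r) ^ k) (fun k => ?_) ?_
  · rw [Real.norm_eq_abs, abs_div, abs_of_pos (pow_pos hr k), div_pow, ← mul_div_assoc]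
    gcongr
    exact hu k
  · simpa using (tendsto_pow_atTop_nhds_zero_of_lt_one (by positivity)
      ((div_lt_one hr).mpr hρr)).const_mul M

section ThirdOrder

variable {t : ℕ → ℝ} {r e c : ℝ}

-- The characteristic polynomial is `(x - r) * (x ^ 2 - e * x + c)`.
theorem quadratic_combination_eq_geometric
    (ht : ∀ k, t (k + 3) = (r + e) * t (k + 2) - (c + r * e) * t (k + 1) + r * c * t k) (k : ℕ) :
    t (k + 2) - e * t (k + 1) + c * t k = (t 2 - e * t 1 + c * t 0) * r ^ k := by
  induction k with
  | zero => ring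
  | succ k ih => linear_combination ht k + r * ih

theorem sub_geometric_two_step
    (ht : ∀ k, t (k + 3) = (r + e) * t (k + 2) - (c + r * e) * t (k + 1) + r * c * t k)
    (hq : r ^ 2 - e * r + c ≠ 0) (k : ℕ) :
    let A := (t 2 - e * t 1 + c * t 0) / (r ^ 2 - e * r + c)
    t (k + 2) - A * r ^ (k + 2) = e * (t (k + 1) - A * r ^ (k + 1)) - c * (t k - A * r ^ k) := by
  intro A
  have hA : A * (r ^ 2 - e * r + c) = t 2 - e * t 1 + c * t 0 := div_mul_cancel₀ _ hq
  linear_combination quadratic_combination_eq_geometric ht k - r ^ k * hA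

theorem tendsto_div_pow_of_three_step {ρ : ℝ}
    (ht : ∀ k, t (k + 3) = (r + e) * t (k + 2) - (c + r * e) * t (k + 1) + r * c * t k)
    (hρ : 0 < ρ) (hρr : ρ < r) (hec : |e| * ρ + |c| ≤ ρ ^ 2) (hq : r ^ 2 - e * r + c ≠ 0) :
    Tendsto (fun k => t k / r ^ k) atTop
      (𝓝 ((t 2 - e * t 1 + c * t 0) / (r ^ 2 - e * r + c))) := by
  set A := (t 2 - e * t 1 + c * t 0) / (r ^ 2 - e * r + c)
  set u : ℕ → ℝ := fun k => t k - A * r ^ k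
  have hr : r ≠ 0 := (hρ.trans hρr).ne'
  have hu : Tendsto (fun k => u k / r ^ k) atTop (𝓝 0) :=
    tendsto_div_pow_zero_of_abs_le hρ.le hρr <|
      abs_le_mul_pow_of_two_step hρ.le hec (le_max_left _ (|u 1| / ρ))
        ((div_le_iff₀ hρ).mp (le_max_right _ _)) (sub_geometric_two_step ht hq)
  have hlim : Tendsto (fun k => A + u k / r ^ k) atTop (𝓝 A) := by
    simpa using hu.const_add A
  refine hlim.congr fun k => ?_
  simp only [u]
  field_simp
  ring

end ThirdOrder

theorem tendsto_rpow_one_div_of_tendsto_div_pow {t : ℕ → ℝ} {r A : ℝ} (hr : 0 < r) (hA : 0 < A)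
    (h : Tendsto (fun k => t k / r ^ k) atTop (𝓝 A)) :
    Tendsto (fun k : ℕ => t k ^ (1 / (k : ℝ))) atTop (𝓝 r) := by
  have hkth : Tendsto (fun k : ℕ => (t k / r ^ k) ^ (1 / (k : ℝ))) atTop (𝓝 1) := by
    simpa using h.rpow tendsto_one_div_atTop_nhds_zero_nat (Or.inl hA.ne')
  have hlim : Tendsto (fun k : ℕ => r * (t k / r ^ k) ^ (1 / (k : ℝ))) atTop (𝓝 r) := by
    simpa using hkth.const_mul r
  refine hlim.congr' ?_
  filter_upwards [h.eventually (eventually_gt_nhds hA), eventually_ne_atTop 0] with k hk hk0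
  calc r * (t k / r ^ k) ^ (1 / (k : ℝ))
      = (r ^ k) ^ (1 / (k : ℝ)) * (t k / r ^ k) ^ (1 / (k : ℝ)) := by
        rw [one_div, Real.pow_rpow_inv_natCast hr.le hk0]
    _ = t k ^ (1 / (k : ℝ)) := by
        rw [← Real.mul_rpow (by positivity) hk.le, mul_div_cancel₀ _ (pow_ne_zero k hr.ne')]

theorem tendsto_rpow_one_div_of_recurrence {a r : ℝ} {t : ℕ → ℝ} (ha : 3 < a)
    (hr : r ∈ Set.Icc (a - 1) a) (hroot : r ^ 3 - a * r ^ 2 + (a - 1) * r - 2 = 0)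
    (h0 : t 0 = 1) (h1 : t 1 = a + 1) (h2 : t 2 = a * (a + 1) - (a - 1))
    (ht : ∀ k, t (k + 3) = a * t (k + 2) - (a - 1) * t (k + 1) + 2 * t k) :
    Tendsto (fun k : ℕ => t k ^ (1 / (k : ℝ))) atTop (𝓝 r) := by
  obtain ⟨hr₁, hr₂⟩ := hr
  set e := a - r
  set c := r ^ 2 - a * r + a - 1
  have hc : r * c = 2 := by linear_combination hroot
  have hc₀ : 0 < c := by nlinarith
  have hc₁ : c < 1 := by nlinarith
  have ht' (k : ℕ) :
      t (k + 3) = (r + e) * t (k + 2) - (c + r * e) * t (k + 1) + r * c * t k := by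
    rw [hc]; linear_combination ht k
  have hq : 0 < r ^ 2 - e * r + c := by nlinarith
  have hA : 0 < (t 2 - e * t 1 + c * t 0) / (r ^ 2 - e * r + c) := by
    apply div_pos _ hq
    rw [h0, h1, h2]
    nlinarith
  refine tendsto_rpow_one_div_of_tendsto_div_pow (by linarith) hA
    (tendsto_div_pow_of_three_step ht' two_pos (by linarith) ?_ hq.ne')
  rw [abs_of_nonneg (by linarith), abs_of_pos hc₀]
  nlinarith

/-- Exponential growth ratio of `A_u(n)`: if `∑ t_k X^k` is the power series expansion of
`(1+X)/(1-(2n²-1)X+2(n²-1)X²-2X³)`, then the cubic `r³-(2n²-1)r²+2(n²-1)r-2` has a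
largest real root `r_n`, which satisfies `r_n > 1`, and `lim t_k^(1/k) = r_n`. -/
theorem stmt_10 (n : ℕ) (hn : 2 ≤ n) (t : ℕ → ℝ)
    (ht : (1 - PowerSeries.C (R := ℝ) (2 * (n : ℝ) ^ 2 - 1) * PowerSeries.X
            + PowerSeries.C (R := ℝ) (2 * ((n : ℝ) ^ 2 - 1)) * PowerSeries.X ^ 2
            - PowerSeries.C (R := ℝ) 2 * PowerSeries.X ^ 3) * PowerSeries.mk t
          = 1 + PowerSeries.X) :
    ∃ rn : ℝ,
      (rn ^ 3 - (2 * (n : ℝ) ^ 2 - 1) * rn ^ 2 + 2 * ((n : ℝ) ^ 2 - 1) * rn - 2 = 0) ∧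
      (∀ x : ℝ, x ^ 3 - (2 * (n : ℝ) ^ 2 - 1) * x ^ 2 + 2 * ((n : ℝ) ^ 2 - 1) * x - 2 = 0 →
        x ≤ rn) ∧
      1 < rn ∧
      Tendsto (fun k : ℕ => (t k) ^ (1 / (k : ℝ))) atTop (nhds rn) := by
  set a : ℝ := 2 * (n : ℝ) ^ 2 - 1
  have hb : 2 * ((n : ℝ) ^ 2 - 1) = a - 1 := by ring
  have ha : 3 < a := by
    have : (2 : ℝ) ≤ n := by exact_mod_cast hn
    nlinarith
  rw [hb] at ht ⊢
  obtain ⟨h0, h1, h2, hrec⟩ := coeff_eq_of_cubic_mul_mk_eq ht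
  obtain ⟨r, hr, hroot⟩ := exists_root_mem_Icc_of_two_le (by linarith : 2 ≤ a)
  exact ⟨r, hroot, fun x hx => le_of_root_of_sub_one_le (by linarith) hr.1 hroot hx,
    by linarith [hr.1], tendsto_rpow_one_div_of_recurrence (by linarith) hr hroot h0 h1 h2 hrec⟩
end

section
/- Let n ≥ 5 be an integer and define (d_k) by d_0 = 1, d_1 = n−1, d_{k+1} = (n−2)·d_k − d_{k−1} for k ≥ 1. Then in the ring of formal power series ℝ⟦X⟧ one has (1 − X)·((1+X)² − (n−2)²X) · ∑_{k≥0} d_k² X^k = (1+X)² + 2(n−2)X. -/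
/-!
With `c = n - 2` the sequence satisfies `d (k + 2) = c d (k + 1) - d k`, and the squares of any
solution of this recurrence satisfy the third-order recurrence with characteristic polynomial
`1 - (c² - 1) X + (c² - 1) X² - X³ = (1 - X) ((1 + X)² - c² X)`. Multiplying the series of squares
by this polynomial therefore leaves only the terms of degree at most two, which are read off from
`d 0`, `d 1`, `d 2`.
-/

open PowerSeries

theorem sq_add_three_of_add_two {R : Type*} [CommRing R] (a : ℕ → R) (c : R)
    (h : ∀ k, a (k + 2) = c * a (k + 1) - a k) (k : ℕ) :
    a (k + 3) ^ 2 = (c ^ 2 - 1) * (a (k + 2) ^ 2 - a (k + 1) ^ 2) + a k ^ 2 := by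
  have h₃ : a (k + 3) = c * a (k + 2) - a (k + 1) := h (k + 1)
  have h₀ : a k = c * a (k + 1) - a (k + 2) := by rw [h k]; ring
  rw [h₃, h₀]
  ring

theorem PowerSeries.mul_mk_of_add_three {R : Type*} [CommRing R] (e : ℕ → R) (p : R)
    (h : ∀ k, e (k + 3) = p * (e (k + 2) - e (k + 1)) + e k) :
    (1 - C p * X + C p * X ^ 2 - X ^ 3) * mk e
      = C (e 0) + C (e 1 - p * e 0) * X + C (e 2 - p * e 1 + p * e 0) * X ^ 2 := by
  ext k
  simp only [sub_mul, add_mul, one_mul, mul_assoc, map_sub, map_add, coeff_C_mul, coeff_mk,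
    coeff_C]
  match k with
  | 0 | 1 | 2 => simp [coeff_X, coeff_X_pow_mul']
  | k + 3 => simp [coeff_X, coeff_X_pow_mul', coeff_succ_X_mul, h]; ring

/-- The sphere-volume series of `A_s(n)`:
`S(z) = ∑ d_k² z^k = ((1+z)² + 2(n-2)z)/((1-z)((1+z)² - (n-2)²z))`. -/
theorem stmt_12 (n : ℕ) (hn : 5 ≤ n) (d : ℕ → ℕ)
    (h0 : d 0 = 1) (h1 : d 1 = n - 1)
    (hrec : ∀ k : ℕ, 1 ≤ k → d (k + 1) + d (k - 1) = (n - 2) * d k) :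
    (1 - PowerSeries.X) *
        ((1 + PowerSeries.X) ^ 2 - PowerSeries.C (((n : ℝ) - 2) ^ 2) * PowerSeries.X) *
        PowerSeries.mk (fun k => ((d k : ℝ)) ^ 2)
      = (1 + PowerSeries.X) ^ 2 + PowerSeries.C (2 * ((n : ℝ) - 2)) * PowerSeries.X := by
  set c : ℝ := (n : ℝ) - 2
  have hd : ∀ k, (d (k + 2) : ℝ) = c * d (k + 1) - d k := fun k => by
    have := hrec (k + 1) (by omega)
    simp only [add_tsub_cancel_right] at this
    rw [eq_sub_iff_add_eq, ← Nat.cast_add, this]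
    push_cast [show 2 ≤ n by omega]
    rfl
  have hd0 : (d 0 : ℝ) = 1 := by simp [h0]
  have hd1 : (d 1 : ℝ) = c + 1 := by push_cast [h1, show 1 ≤ n by omega, c]; ring
  have hd2 : (d 2 : ℝ) = c ^ 2 + c - 1 := by rw [hd 0, hd0, hd1]; ring
  have hcubic : (1 - X) * ((1 + X) ^ 2 - C (c ^ 2) * X)
      = 1 - C (c ^ 2 - 1) * X + C (c ^ 2 - 1) * X ^ 2 - (X ^ 3 : ℝ⟦X⟧) := by
    simp only [map_sub, map_one]; ring
  rw [hcubic, mul_mk_of_add_three _ _ (sq_add_three_of_add_two (fun k => (d k : ℝ)) c hd),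
    hd0, hd1, hd2]
  have hlin : (c + 1) ^ 2 - (c ^ 2 - 1) * 1 ^ 2 = 1 + 1 + 2 * c := by ring
  have hquad : (c ^ 2 + c - 1) ^ 2 - (c ^ 2 - 1) * (c + 1) ^ 2 + (c ^ 2 - 1) * 1 ^ 2 = 1 := by ring
  rw [hlin, hquad]
  simp only [map_add, map_mul, map_one, one_pow]
  ring
end

section
/- Let r ≥ 1 and n ≥ 1 be integers, let α_1, …, α_n be vectors in ℝ^r, and let B be a finite set of vectors in ℝ^r such that every β ∈ B can be written as β = α_{j'} − α_j for some indices j, j' ∈ {1,…,n}. Then for every ζ ∈ ℝ^r satisfying |⟨ζ, β⟩| ≤ 1/2 for all β ∈ B, one has |(1/n) ∑_{j=1}^n exp(2πi⟨ζ, α_j⟩)|² ≤ exp( −(4/n²) ∑_{β ∈ B} ⟨ζ, β⟩² ). -/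
open RealInnerProductSpace

lemma cos_quad_bound {t : ℝ} (ht : |t| ≤ 1 / 2) :
    Real.cos (2 * Real.pi * t) ≤ 1 - 4 * t ^ 2 := by
  have hcos : Real.cos (2 * Real.pi * t) = 1 - 2 * Real.sin (Real.pi * t) ^ 2 := by
    have h1 := Real.cos_two_mul (Real.pi * t)
    have h2 := Real.sin_sq_add_cos_sq (Real.pi * t)
    have h3 : 2 * Real.pi * t = 2 * (Real.pi * t) := by ring
    rw [h3, h1]; nlinarith
  rw [hcos]
  have key : 2 * |t| ≤ Real.sin (Real.pi * |t|) := by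
    have h0 : (0:ℝ) ≤ |t| := abs_nonneg t
    have hpi := Real.pi_pos
    have h1 : Real.pi * |t| ≤ Real.pi / 2 := by nlinarith
    have h4 := Real.mul_le_sin (mul_nonneg hpi.le h0) h1
    have h2 : 2 / Real.pi * (Real.pi * |t|) = 2 * |t| := by
      field_simp
    linarith [h2 ▸ h4]
  have hsq : Real.sin (Real.pi * t) ^ 2 = Real.sin (Real.pi * |t|) ^ 2 := by
    rcases abs_cases t with ⟨h, _⟩ | ⟨h, _⟩
    · rw [h]
    · rw [h]; rw [show Real.pi * -t = -(Real.pi * t) by ring, Real.sin_neg]; ring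
  have h2t : (0:ℝ) ≤ 2 * |t| := by positivity
  have hsin : (2 * |t|) ^ 2 ≤ Real.sin (Real.pi * |t|) ^ 2 := by nlinarith
  have habs : |t| ^ 2 = t ^ 2 := sq_abs t
  nlinarith [hsin, hsq]

lemma exp_re_cos (a b : ℝ) :
    (Complex.exp (2 * Real.pi * Complex.I * a) *
      (starRingEnd ℂ) (Complex.exp (2 * Real.pi * Complex.I * b))).re
      = Real.cos (2 * Real.pi * (a - b)) := by
  rw [← Complex.exp_conj, ← Complex.exp_add]
  have h : 2 * (Real.pi : ℂ) * Complex.I * a +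
      (starRingEnd ℂ) (2 * (Real.pi : ℂ) * Complex.I * b)
      = ((2 * Real.pi * (a - b) : ℝ) : ℂ) * Complex.I := by
    simp only [map_mul, Complex.conj_I, Complex.conj_ofReal, map_ofNat]
    push_cast
    ring
  rw [h, Complex.exp_ofReal_mul_I_re]

/-- Gaussian-type bound for the characteristic function of one step of a lattice random walk:
`|Φ_S(ζ)|² ≤ exp(-(4/n²) ∑_{β ∈ B} ⟨ζ,β⟩²)` on the cross-section `|⟨ζ,β⟩| ≤ 1/2`. -/
theorem stmt_14 (r n : ℕ) (hr : 1 ≤ r) (hn : 1 ≤ n)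
    (α : Fin n → EuclideanSpace ℝ (Fin r))
    (B : Finset (EuclideanSpace ℝ (Fin r)))
    (hB : ∀ β ∈ B, ∃ j j' : Fin n, β = α j' - α j)
    (ζ : EuclideanSpace ℝ (Fin r))
    (hζ : ∀ β ∈ B, |⟪ζ, β⟫| ≤ 1 / 2) :
    ‖(1 / (n : ℂ)) * ∑ j, Complex.exp (2 * Real.pi * Complex.I * (⟪ζ, α j⟫ : ℂ))‖ ^ 2
      ≤ Real.exp (-(4 / (n : ℝ) ^ 2) * ∑ β ∈ B, ⟪ζ, β⟫ ^ 2) := by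
  classical
  have hn0 : (0:ℝ) < n := by exact_mod_cast hn
  set t : Fin n → ℝ := fun j => ⟪ζ, α j⟫ with ht
  set S : ℂ := ∑ j, Complex.exp (2 * Real.pi * Complex.I * (t j : ℂ)) with hSdef
  -- Step 1: compute the squared norm as a double cosine sum
  have hnorm : ‖(1 / (n : ℂ)) * S‖ ^ 2
      = (1 / (n:ℝ)^2) * ∑ j, ∑ k, Real.cos (2 * Real.pi * (t j - t k)) := by
    have hSS : ‖S‖ ^ 2 = ∑ j, ∑ k, Real.cos (2 * Real.pi * (t j - t k)) := by
      have h1 : (‖S‖ : ℝ) ^ 2 = (S * (starRingEnd ℂ) S).re := by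
        rw [Complex.mul_conj, Complex.ofReal_re, Complex.normSq_eq_norm_sq]
      rw [h1, hSdef, map_sum, Finset.sum_mul_sum]
      simp only [Complex.re_sum]
      exact Finset.sum_congr rfl fun j _ =>
        Finset.sum_congr rfl fun k _ => exp_re_cos (t j) (t k)
    rw [norm_mul, mul_pow, hSS]
    congr 1
    rw [norm_div, norm_one, Complex.norm_natCast]
    field_simp
  rw [hnorm]
  -- Step 2: witnesses for B
  have hne : (0:ℕ) < n := hn
  set g : EuclideanSpace ℝ (Fin r) → Fin n × Fin n := fun β =>
    if h : ∃ p : Fin n × Fin n, β = α p.2 - α p.1 then h.choose else (⟨0, hne⟩, ⟨0, hne⟩)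
    with hgdef
  have hg : ∀ β ∈ B, β = α (g β).2 - α (g β).1 := by
    intro β hβ
    obtain ⟨j, j', h⟩ := hB β hβ
    have hex : ∃ p : Fin n × Fin n, β = α p.2 - α p.1 := ⟨(j, j'), h⟩
    simp only [hgdef, dif_pos hex]
    exact hex.choose_spec
  have hginj : Set.InjOn g B := by
    intro β₁ h₁ β₂ h₂ heq
    rw [hg β₁ h₁, hg β₂ h₂, heq]
  -- Step 3: split the sum over pairs
  set F : Fin n × Fin n → ℝ := fun p => Real.cos (2 * Real.pi * (t p.2 - t p.1)) with hF
  have hsum : ∑ j, ∑ k, Real.cos (2 * Real.pi * (t j - t k)) = ∑ p : Fin n × Fin n, F p := by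
    rw [Fintype.sum_prod_type]
    refine Finset.sum_congr rfl fun j _ => Finset.sum_congr rfl fun k _ => ?_
    have h1 : F (j, k) = Real.cos (2 * Real.pi * (t k - t j)) := rfl
    rw [h1, ← Real.cos_neg (2 * Real.pi * (t k - t j))]
    congr 1
    ring
  set P : Finset (Fin n × Fin n) := B.image g with hP
  have hPsub : P ⊆ Finset.univ := Finset.subset_univ P
  have hsplit : ∑ p ∈ Finset.univ \ P, F p + ∑ p ∈ P, F p = ∑ p : Fin n × Fin n, F p :=
    Finset.sum_sdiff hPsub
  have hPsum : ∑ p ∈ P, F p = ∑ β ∈ B, Real.cos (2 * Real.pi * ⟪ζ, β⟫) := by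
    rw [hP, Finset.sum_image (fun x hx y hy h => hginj hx hy h)]
    refine Finset.sum_congr rfl fun β hβ => ?_
    have h2 : t (g β).2 - t (g β).1 = ⟪ζ, β⟫ := by
      rw [ht]
      simp only
      rw [← inner_sub_right, ← hg β hβ]
    have h1 : F (g β) = Real.cos (2 * Real.pi * (t (g β).2 - t (g β).1)) := rfl
    rw [h1, h2]
  have hcard : (P.card : ℝ) = B.card := by
    rw [hP, Finset.card_image_of_injOn hginj]
  -- Step 4: bounds
  have hrest : ∑ p ∈ Finset.univ \ P, F p ≤ (n:ℝ)^2 - B.card := by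
    have h1 : ∑ p ∈ Finset.univ \ P, F p ≤ (Finset.univ \ P).card * 1 := by
      rw [← nsmul_eq_mul]
      exact Finset.sum_le_card_nsmul _ _ 1 fun p _ => Real.cos_le_one _
    have h2 : ((Finset.univ \ P).card : ℝ) = (n:ℝ)^2 - B.card := by
      rw [Finset.card_sdiff_of_subset hPsub, ← hcard]
      have hle : P.card ≤ (Finset.univ : Finset (Fin n × Fin n)).card := Finset.card_le_card hPsub
      push_cast [Nat.cast_sub hle]
      simp [Finset.card_univ, sq]
    calc ∑ p ∈ Finset.univ \ P, F p ≤ (Finset.univ \ P).card * 1 := h1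
    _ = (n:ℝ)^2 - B.card := by rw [mul_one, h2]
  have hBsum : ∑ β ∈ B, Real.cos (2 * Real.pi * ⟪ζ, β⟫)
      ≤ (B.card : ℝ) - 4 * ∑ β ∈ B, ⟪ζ, β⟫ ^ 2 := by
    calc ∑ β ∈ B, Real.cos (2 * Real.pi * ⟪ζ, β⟫)
        ≤ ∑ β ∈ B, (1 - 4 * ⟪ζ, β⟫ ^ 2) :=
          Finset.sum_le_sum fun β hβ => cos_quad_bound (hζ β hβ)
      _ = (B.card : ℝ) - 4 * ∑ β ∈ B, ⟪ζ, β⟫ ^ 2 := by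
          rw [Finset.sum_sub_distrib, Finset.mul_sum]; simp
  -- Step 5: conclude
  have htotal : ∑ p : Fin n × Fin n, F p ≤ (n:ℝ)^2 - 4 * ∑ β ∈ B, ⟪ζ, β⟫ ^ 2 := by
    rw [← hsplit, hPsum]
    linarith
  have hn2 : (0:ℝ) < (n:ℝ)^2 := by positivity
  have hfin : (1 / (n:ℝ)^2) * ∑ j, ∑ k, Real.cos (2 * Real.pi * (t j - t k))
      ≤ 1 - (4 / (n:ℝ)^2) * ∑ β ∈ B, ⟪ζ, β⟫ ^ 2 := by
    rw [hsum]
    calc (1 / (n:ℝ)^2) * ∑ p : Fin n × Fin n, F p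
        ≤ (1 / (n:ℝ)^2) * ((n:ℝ)^2 - 4 * ∑ β ∈ B, ⟪ζ, β⟫ ^ 2) := by
          exact mul_le_mul_of_nonneg_left htotal (by positivity)
      _ = 1 - (4 / (n:ℝ)^2) * ∑ β ∈ B, ⟪ζ, β⟫ ^ 2 := by
          field_simp
  refine hfin.trans ?_
  have hexp := Real.add_one_le_exp (-(4 / (n:ℝ)^2) * ∑ β ∈ B, ⟪ζ, β⟫ ^ 2)
  linarith
end
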